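/- Let DMU_o = (x_o,y_o), o ∈ J, be FDH_V-efficient. Then Right-IRS prevails at DMU_o if and only if σ_o^+ > 1. -/

import Mathlib

open Set

noncomputable section

/-- The FDH variable-returns-to-scale technology:
`T = {(x,y) : y ≥ 0 and ∃ j, x_j ≤ x and y ≤ y_j}`. -/
def FDH {n m s : ℕ} (x : Fin n → Fin m → ℝ) (y : Fin n → Fin s → ℝ) :
    Set ((Fin m → ℝ) × (Fin s → ℝ)) :=
  {p | (∀ r, 0 ≤ p.2 r) ∧ ∃ j : Fin n, (∀ i, x j i ≤ p.1 i) ∧ (∀ r, p.2 r ≤ y j r)}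

/-- DMU_o is FDH_V-efficient: no (x,y) ∈ T with x ≤ x_o, y ≥ y_o, (x,y) ≠ (x_o,y_o). -/
def FDHEfficient {n m s : ℕ} (x : Fin n → Fin m → ℝ) (y : Fin n → Fin s → ℝ)
    (o : Fin n) : Prop :=
  ¬ ∃ p ∈ FDH x y, (∀ i, p.1 i ≤ x o i) ∧ (∀ r, y o r ≤ p.2 r) ∧ p ≠ (x o, y o)

/-- `α_{jo} = max_i x_{ij} / x_{io}`. -/
def alphaRatio {n m s : ℕ} (x : Fin n → Fin m → ℝ) (_y : Fin n → Fin s → ℝ)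
    (o j : Fin n) : ℝ :=
  ⨆ i : Fin m, x j i / x o i

/-- `β_{jo} = min_r y_{rj} / y_{ro}`. -/
def betaRatio {n m s : ℕ} (_x : Fin n → Fin m → ℝ) (y : Fin n → Fin s → ℝ)
    (o j : Fin n) : ℝ :=
  ⨅ r : Fin s, y j r / y o r

/-- `θ_o(D) = inf {θ : ∃ j ∈ J, δ ∈ D, δ x_j ≤ θ x_o, δ y_j ≥ y_o}`. -/
def thetaEff {n m s : ℕ} (x : Fin n → Fin m → ℝ) (y : Fin n → Fin s → ℝ)
    (o : Fin n) (D : Set ℝ) : ℝ :=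
  sInf {θ : ℝ | ∃ j : Fin n, ∃ δ ∈ D,
    (∀ i, δ * x j i ≤ θ * x o i) ∧ (∀ r, y o r ≤ δ * y j r)}

/-- G-IRS prevails at DMU_o iff `θ_o^{ND} > θ_o^{C} = θ_o^{NI}`. -/
def GIRS {n m s : ℕ} (x : Fin n → Fin m → ℝ) (y : Fin n → Fin s → ℝ)
    (o : Fin n) : Prop :=
  thetaEff x y o (Ici 1) > thetaEff x y o (Ici 0) ∧
    thetaEff x y o (Ici 0) = thetaEff x y o (Icc 0 1)

/-- G-DRS prevails at DMU_o iff `θ_o^{NI} > θ_o^{C} = θ_o^{ND}`. -/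
def GDRS {n m s : ℕ} (x : Fin n → Fin m → ℝ) (y : Fin n → Fin s → ℝ)
    (o : Fin n) : Prop :=
  thetaEff x y o (Icc 0 1) > thetaEff x y o (Ici 0) ∧
    thetaEff x y o (Ici 0) = thetaEff x y o (Ici 1)

/-- G-CRS prevails at DMU_o iff `θ_o^{C} = θ_o^{NI} = θ_o^{ND} = 1`. -/
def GCRS {n m s : ℕ} (x : Fin n → Fin m → ℝ) (y : Fin n → Fin s → ℝ)
    (o : Fin n) : Prop :=
  thetaEff x y o (Ici 0) = 1 ∧ thetaEff x y o (Icc 0 1) = 1 ∧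
    thetaEff x y o (Ici 1) = 1

/-- G-SCRS prevails at DMU_o iff `θ_o^{C} = θ_o^{NI} = θ_o^{ND} < 1`. -/
def GSCRS {n m s : ℕ} (x : Fin n → Fin m → ℝ) (y : Fin n → Fin s → ℝ)
    (o : Fin n) : Prop :=
  thetaEff x y o (Ici 0) = thetaEff x y o (Icc 0 1) ∧
    thetaEff x y o (Icc 0 1) = thetaEff x y o (Ici 1) ∧
    thetaEff x y o (Ici 1) < 1

/-- Response function `β_o(α) = sup {β : (α x_o, β y_o) ∈ T}`. -/
def respFun {n m s : ℕ} (x : Fin n → Fin m → ℝ) (y : Fin n → Fin s → ℝ)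
    (o : Fin n) (α : ℝ) : ℝ :=
  sSup {β : ℝ | ((fun i => α * x o i), (fun r => β * y o r)) ∈ FDH x y}

/-- Maximum incremental ratio `σ_o^+ = sup_{α > 1} (β_o(α) - 1)/(α - 1)`. -/
def sigmaPlus {n m s : ℕ} (x : Fin n → Fin m → ℝ) (y : Fin n → Fin s → ℝ)
    (o : Fin n) : ℝ :=
  sSup {ρ : ℝ | ∃ α : ℝ, 1 < α ∧ ρ = (respFun x y o α - 1) / (α - 1)}

/-- Minimum decremental ratio `σ_o^- = inf {(β_o(α)-1)/(α-1) : α < 1 feasible}`,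
taken in the extended reals (so it is `+∞` when no `α < 1` is feasible). -/
def sigmaMinus {n m s : ℕ} (x : Fin n → Fin m → ℝ) (y : Fin n → Fin s → ℝ)
    (o : Fin n) : EReal :=
  sInf {ρ : EReal | ∃ α : ℝ, α < 1 ∧
    (∃ β : ℝ, ((fun i => α * x o i), (fun r => β * y o r)) ∈ FDH x y) ∧
    ρ = (((respFun x y o α - 1) / (α - 1) : ℝ) : EReal)}

/-- Right-IRS: `(δ x_o, δ y_o) ∈ int T` for some `δ > 1`. -/
def RightIRS {n m s : ℕ} (x : Fin n → Fin m → ℝ) (y : Fin n → Fin s → ℝ)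
    (o : Fin n) : Prop :=
  ∃ δ : ℝ, 1 < δ ∧
    ((fun i => δ * x o i), (fun r => δ * y o r)) ∈ interior (FDH x y)

/-- Right-DRS: `(δ x_o, δ y_o) ∉ T` for every `δ > 1`. -/
def RightDRS {n m s : ℕ} (x : Fin n → Fin m → ℝ) (y : Fin n → Fin s → ℝ)
    (o : Fin n) : Prop :=
  ∀ δ : ℝ, 1 < δ →
    ((fun i => δ * x o i), (fun r => δ * y o r)) ∉ FDH x y

/-- Right-CRS: neither Right-IRS nor Right-DRS. -/
def RightCRS {n m s : ℕ} (x : Fin n → Fin m → ℝ) (y : Fin n → Fin s → ℝ)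
    (o : Fin n) : Prop :=
  ¬ RightIRS x y o ∧ ¬ RightDRS x y o

/-- Left-IRS: `(δ x_o, δ y_o) ∉ T` for every `δ ∈ (0,1)`. -/
def LeftIRS {n m s : ℕ} (x : Fin n → Fin m → ℝ) (y : Fin n → Fin s → ℝ)
    (o : Fin n) : Prop :=
  ∀ δ : ℝ, 0 < δ → δ < 1 →
    ((fun i => δ * x o i), (fun r => δ * y o r)) ∉ FDH x y

/-- Left-DRS: `(δ x_o, δ y_o) ∈ int T` for some `δ ∈ (0,1)`. -/
def LeftDRS {n m s : ℕ} (x : Fin n → Fin m → ℝ) (y : Fin n → Fin s → ℝ)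
    (o : Fin n) : Prop :=
  ∃ δ : ℝ, 0 < δ ∧ δ < 1 ∧
    ((fun i => δ * x o i), (fun r => δ * y o r)) ∈ interior (FDH x y)

/-- Left-CRS: neither Left-IRS nor Left-DRS. -/
def LeftCRS {n m s : ℕ} (x : Fin n → Fin m → ℝ) (y : Fin n → Fin s → ℝ)
    (o : Fin n) : Prop :=
  ¬ LeftIRS x y o ∧ ¬ LeftDRS x y o

/-!
Both sides say that some `α > 1` has `β_o(α) > α`. If `(δ x_o, δ y_o)` is interior, then
`(δ x_o, t y_o) ∈ T` for some `t > δ`, so `β_o(δ) > δ`. Conversely, a unit `j` with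
`x_j ≤ α x_o` and `y_j ≥ β y_o` for some `β > α` dominates `(δ x_o, δ y_o)` strictly for every
`δ ∈ (α, β)`, which puts that point in the interior of `T`. By efficiency, a unit producing
strictly more than `y_o` uses strictly more of some input `i`, so `β_o(α) > 1` forces
`α ≥ x_{ij} / x_{io} > 1`; hence the incremental ratios are bounded and `σ_o^+` is their true
supremum.
-/

open Filter Topology

section

variable {n m s : ℕ} {x : Fin n → Fin m → ℝ} {y : Fin n → Fin s → ℝ} {o : Fin n}

variable (x y o) in
def respSet (α : ℝ) : Set ℝ :=
  {β : ℝ | ((fun i => α * x o i), (fun r => β * y o r)) ∈ FDH x y}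

variable (x y o) in
def incrRatios : Set ℝ :=
  {ρ : ℝ | ∃ α : ℝ, 1 < α ∧ ρ = (respFun x y o α - 1) / (α - 1)}

theorem sigmaPlus_eq_sSup_incrRatios : sigmaPlus x y o = sSup (incrRatios x y o) := rfl

theorem betaRatio_le_div (j : Fin n) (r : Fin s) : betaRatio x y o j ≤ y j r / y o r :=
  ciInf_le (Finite.bddBelow_range _) r

theorem mul_lt_of_lt_betaRatio (hyo : ∀ r, 0 < y o r) {β : ℝ} {j : Fin n}
    (h : β < betaRatio x y o j) (r : Fin s) : β * y o r < y j r :=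
  (lt_div_iff₀ (hyo r)).1 (h.trans_le (betaRatio_le_div j r))

theorem le_betaRatio_iff [Nonempty (Fin s)] (hyo : ∀ r, 0 < y o r) {β : ℝ} {j : Fin n} :
    β ≤ betaRatio x y o j ↔ ∀ r, β * y o r ≤ y j r :=
  ⟨fun h r => (le_div_iff₀ (hyo r)).1 (h.trans (betaRatio_le_div j r)),
    fun h => le_ciInf fun r => (le_div_iff₀ (hyo r)).2 (h r)⟩

theorem betaRatio_self [Nonempty (Fin s)] (hyo : ∀ r, 0 < y o r) : betaRatio x y o o = 1 :=
  le_antisymm ((betaRatio_le_div o (Classical.arbitrary _)).trans_eq (div_self (hyo _).ne'))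
    ((le_betaRatio_iff hyo).2 fun _ => (one_mul _).le)

theorem mem_respSet_iff [Nonempty (Fin s)] (hyo : ∀ r, 0 < y o r) {α β : ℝ} :
    β ∈ respSet x y o α ↔
      0 ≤ β ∧ ∃ j, (∀ i, x j i ≤ α * x o i) ∧ β ≤ betaRatio x y o j := by
  simp only [respSet, FDH, le_betaRatio_iff hyo]
  constructor
  · rintro ⟨h0, hj⟩
    exact ⟨nonneg_of_mul_nonneg_left (h0 (Classical.arbitrary _)) (hyo _), hj⟩
  · rintro ⟨h0, hj⟩
    exact ⟨fun r => mul_nonneg h0 (hyo r).le, hj⟩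

theorem one_mem_respSet [Nonempty (Fin s)] (hxo : ∀ i, 0 < x o i) (hyo : ∀ r, 0 < y o r)
    {α : ℝ} (hα : 1 ≤ α) : 1 ∈ respSet x y o α :=
  (mem_respSet_iff hyo).2
    ⟨zero_le_one, o, fun i => le_mul_of_one_le_left (hxo i).le hα, (betaRatio_self hyo).ge⟩

theorem iSup_betaRatio_mem_upperBounds [Nonempty (Fin s)] (hyo : ∀ r, 0 < y o r) (α : ℝ) :
    ⨆ j, betaRatio x y o j ∈ upperBounds (respSet x y o α) := fun β hβ => by
  obtain ⟨-, j, -, hβj⟩ := (mem_respSet_iff hyo).1 hβ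
  exact hβj.trans (le_ciSup (Finite.bddAbove_range _) j)

theorem bddAbove_respSet [Nonempty (Fin s)] (hyo : ∀ r, 0 < y o r) (α : ℝ) :
    BddAbove (respSet x y o α) :=
  ⟨_, iSup_betaRatio_mem_upperBounds hyo α⟩

theorem respFun_le_iSup_betaRatio [Nonempty (Fin s)] (hxo : ∀ i, 0 < x o i)
    (hyo : ∀ r, 0 < y o r) {α : ℝ} (hα : 1 ≤ α) :
    respFun x y o α ≤ ⨆ j, betaRatio x y o j :=
  csSup_le ⟨1, one_mem_respSet hxo hyo hα⟩ (iSup_betaRatio_mem_upperBounds hyo α)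

theorem mem_interior_FDH {p : (Fin m → ℝ) × (Fin s → ℝ)} (j : Fin n)
    (hxj : ∀ i, x j i < p.1 i) (hpos : ∀ r, 0 < p.2 r) (hyj : ∀ r, p.2 r < y j r) :
    p ∈ interior (FDH x y) := by
  rw [mem_interior_iff_mem_nhds]
  have hx' : ∀ᶠ q in 𝓝 p, ∀ i, x j i < q.1 i := eventually_all.2 fun i =>
    continuousAt_const.eventually_lt (by fun_prop) (hxj i)
  have hpos' : ∀ᶠ q in 𝓝 p, ∀ r, 0 < q.2 r := eventually_all.2 fun r =>
    continuousAt_const.eventually_lt (by fun_prop) (hpos r)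
  have hy' : ∀ᶠ q in 𝓝 p, ∀ r, q.2 r < y j r := eventually_all.2 fun r =>
    ContinuousAt.eventually_lt (by fun_prop) continuousAt_const (hyj r)
  filter_upwards [hx', hpos', hy'] with q h1 h2 h3
  exact ⟨fun r => (h2 r).le, j, fun i => (h1 i).le, fun r => (h3 r).le⟩

theorem RightIRS.exists_lt_respFun [Nonempty (Fin s)] (hyo : ∀ r, 0 < y o r)
    (h : RightIRS x y o) : ∃ α, 1 < α ∧ α < respFun x y o α := by
  obtain ⟨δ, hδ, hint⟩ := h
  have hcont : Continuous fun t : ℝ => ((fun i => δ * x o i), fun r => t * y o r) := by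
    fun_prop
  have hnear : ∀ᶠ t in 𝓝[>] δ, t ∈ respSet x y o δ :=
    nhdsWithin_le_nhds ((hcont.tendsto δ).eventually (mem_interior_iff_mem_nhds.1 hint))
  obtain ⟨t, ht, hδt⟩ := (hnear.and self_mem_nhdsWithin).exists
  exact ⟨δ, hδ, hδt.trans_le (le_csSup (bddAbove_respSet hyo δ) ht)⟩

theorem rightIRS_of_lt_respFun [Nonempty (Fin s)] (hxo : ∀ i, 0 < x o i)
    (hyo : ∀ r, 0 < y o r) {α : ℝ} (hα : 1 < α) (h : α < respFun x y o α) :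
    RightIRS x y o := by
  obtain ⟨β, hβ, hαβ⟩ := exists_lt_of_lt_csSup ⟨1, one_mem_respSet hxo hyo hα.le⟩ h
  obtain ⟨-, j, hxj, hβj⟩ := (mem_respSet_iff hyo).1 hβ
  obtain ⟨δ, hαδ, hδβ⟩ := exists_between hαβ
  refine ⟨δ, hα.trans hαδ, mem_interior_FDH j (fun i => ?_) (fun r => ?_) (fun r => ?_)⟩
  · exact (hxj i).trans_lt (mul_lt_mul_of_pos_right hαδ (hxo i))
  · exact mul_pos (zero_lt_one.trans (hα.trans hαδ)) (hyo r)
  · exact mul_lt_of_lt_betaRatio hyo (hδβ.trans_le hβj) r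

theorem rightIRS_iff_exists_lt_respFun [Nonempty (Fin s)] (hxo : ∀ i, 0 < x o i)
    (hyo : ∀ r, 0 < y o r) : RightIRS x y o ↔ ∃ α, 1 < α ∧ α < respFun x y o α :=
  ⟨RightIRS.exists_lt_respFun hyo, fun ⟨_, hα, h⟩ => rightIRS_of_lt_respFun hxo hyo hα h⟩

theorem FDHEfficient.exists_lt_of_one_lt_betaRatio [Nonempty (Fin s)]
    (heff : FDHEfficient x y o) (hyo : ∀ r, 0 < y o r) {j : Fin n}
    (hj : 1 < betaRatio x y o j) : ∃ i, x o i < x j i := by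
  by_contra! hle
  have hlt : ∀ r, y o r < y j r := fun r => by simpa using mul_lt_of_lt_betaRatio hyo hj r
  let r₀ : Fin s := Classical.arbitrary _
  exact heff ⟨(x o, y j), ⟨fun r => ((hyo r).trans (hlt r)).le, j, hle, fun _ => le_rfl⟩,
    fun _ => le_rfl, fun r => (hlt r).le,
    fun h => (hlt r₀).ne' (congrFun (congrArg Prod.snd h) r₀)⟩

theorem FDHEfficient.bddAbove_incrRatios [Nonempty (Fin s)] (heff : FDHEfficient x y o)
    (hxo : ∀ i, 0 < x o i) (hyo : ∀ r, 0 < y o r) : BddAbove (incrRatios x y o) := by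
  set B := ⨆ j, betaRatio x y o j
  obtain ⟨M, hM⟩ :=
    (Set.finite_range fun p : Fin n × Fin m => (B - 1) / (x p.1 p.2 / x o p.2 - 1)).bddAbove
  refine ⟨max 0 M, ?_⟩
  rintro _ ⟨α, hα, rfl⟩
  have hα1 : 0 < α - 1 := sub_pos.2 hα
  rcases le_or_gt (respFun x y o α) 1 with hle | hgt
  · exact le_max_of_le_left (div_nonpos_of_nonpos_of_nonneg (sub_nonpos.2 hle) hα1.le)
  obtain ⟨β, hβ, h1β⟩ := exists_lt_of_lt_csSup ⟨1, one_mem_respSet hxo hyo hα.le⟩ hgt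
  obtain ⟨-, j, hxj, hβj⟩ := (mem_respSet_iff hyo).1 hβ
  obtain ⟨i, hi⟩ := heff.exists_lt_of_one_lt_betaRatio hyo (h1β.trans_le hβj)
  have hrespB : respFun x y o α ≤ B := respFun_le_iSup_betaRatio hxo hyo hα.le
  have ha1 : 1 < x j i / x o i := (one_lt_div (hxo i)).2 hi
  have haα : x j i / x o i ≤ α := (div_le_iff₀ (hxo i)).2 (hxj i)
  calc (respFun x y o α - 1) / (α - 1) ≤ (B - 1) / (α - 1) := by gcongr
    _ ≤ (B - 1) / (x j i / x o i - 1) := by gcongr; linarith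
    _ ≤ M := hM ⟨(j, i), rfl⟩
    _ ≤ max 0 M := le_max_right _ _

end

theorem stmt10_general {n m s : ℕ} (hs : 0 < s)
    (x : Fin n → Fin m → ℝ) (y : Fin n → Fin s → ℝ)
    (hx : ∀ j i, 0 < x j i) (hy : ∀ j r, 0 < y j r)
    (o : Fin n) (heff : FDHEfficient x y o) :
    RightIRS x y o ↔ 1 < sigmaPlus x y o := by
  have : Nonempty (Fin s) := ⟨⟨0, hs⟩⟩
  have hratio : ∀ {α β : ℝ}, 1 < α → (1 < (β - 1) / (α - 1) ↔ α < β) := fun hα =>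
    (one_lt_div (sub_pos.2 hα)).trans (sub_lt_sub_iff_right 1)
  rw [rightIRS_iff_exists_lt_respFun (hx o) (hy o), sigmaPlus_eq_sSup_incrRatios,
    lt_csSup_iff (heff.bddAbove_incrRatios (hx o) (hy o)) ⟨_, 2, one_lt_two, rfl⟩]
  constructor
  · rintro ⟨α, hα, h⟩
    exact ⟨_, ⟨α, hα, rfl⟩, (hratio hα).2 h⟩
  · rintro ⟨_, ⟨α, hα, rfl⟩, h⟩
    exact ⟨α, hα, (hratio hα).1 h⟩

/-- Right-IRS at the FDH_V-efficient DMU_o iff `σ_o^+ > 1`. -/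
theorem stmt10 {n m s : ℕ} (hm : 0 < m) (hs : 0 < s)
    (x : Fin n → Fin m → ℝ) (y : Fin n → Fin s → ℝ)
    (hx : ∀ j i, 0 < x j i) (hy : ∀ j r, 0 < y j r)
    (o : Fin n) (heff : FDHEfficient x y o) :
    RightIRS x y o ↔ 1 < sigmaPlus x y o :=
  stmt10_general hs x y hx hy o heff
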